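/- arXiv:1709.00084 — 5 statements merged into one kernel-verified Lean document; each statement's English description precedes it below -/
import Mathlib

section
/- (Safety of Sequence Compositions.) Let X ⊆ ℝⁿ, let BT₁ be a BT over ℝⁿ that is safeguarding with respect to step length d > 0, obstacle region O₁, initialization region I₁ ⊆ X, relative to the reachable set X, and suppose additionally that S₁ ∩ O₁ = ∅. Let BT₂ be an arbitrary BT with ‖x − f₂(x)‖ < d for all x, and suppose X is invariant under both dynamics: f₁(X) ⊆ X and f₂(X) ⊆ X. Then BT₀ = Sequence(BT₁, BT₂) is safe with respect to O₁ and I₁: for every x₀ ∈ I₁, the trajectory x_{k+1} = f₀(x_k) satisfies x_k ∉ O₁ for all k ≥ 0. -/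
/-- The three return statuses of a Behavior Tree node. -/
inductive BTStatus : Type
  | Running
  | Success
  | Failure
  deriving DecidableEq

/-- A Behavior Tree over a state space `X`: a dynamics function `f`
(the execution is the iteration `x_{k+1} = f x_k`) together with a
return-status function `r`. -/
structure BT (X : Type*) where
  f : X → X
  r : X → BTStatus

namespace BT

variable {X : Type*}

/-- Success region `S = r⁻¹(Success)`. -/
def S (b : BT X) : Set X := {x | b.r x = BTStatus.Success}

/-- Failure region `F = r⁻¹(Failure)`. -/
def F (b : BT X) : Set X := {x | b.r x = BTStatus.Failure}

/-- Running region `R = r⁻¹(Running)`. -/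
def R (b : BT X) : Set X := {x | b.r x = BTStatus.Running}

/-- Sequence composition: run `b₂` on the Success region of `b₁`,
and `b₁` elsewhere. -/
def Sequence (b₁ b₂ : BT X) : BT X where
  f x := if b₁.r x = BTStatus.Success then b₂.f x else b₁.f x
  r x := if b₁.r x = BTStatus.Success then b₂.r x else b₁.r x

/-- Fallback composition: run `b₂` on the Failure region of `b₁`,
and `b₁` elsewhere. -/
def Fallback (b₁ b₂ : BT X) : BT X where
  f x := if b₁.r x = BTStatus.Failure then b₂.f x else b₁.f x
  r x := if b₁.r x = BTStatus.Failure then b₂.r x else b₁.r x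

/-- A BT is Finite Time Successful (FTS) with region of attraction `R'` and
time bound `τ` (each execution step taking time `Δt`): from every initial
state in `R'` the trajectory stays in `R'` until, within time `τ`, it
reaches the Success region. -/
def FTS (b : BT X) (Δt : ℝ) (R' : Set X) (τ : ℝ) : Prop :=
  ∀ x₀ ∈ R', ∃ N : ℕ, (N : ℝ) * Δt ≤ τ ∧
    (∀ k < N, b.f^[k] x₀ ∈ R') ∧ b.f^[N] x₀ ∈ b.S

/-- A BT is safe with respect to obstacle region `O` and initialization
region `I` if no trajectory starting in `I` ever enters `O`. -/
def Safe (b : BT X) (O I : Set X) : Prop :=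
  ∀ x₀ ∈ I, ∀ k : ℕ, b.f^[k] x₀ ∉ O

end BT

/-- A BT is safeguarding with respect to step length `d`, obstacle region `O`
and initialization region `I`, relative to the reachable set `X`: it is safe
w.r.t. `O` and `I`, it is FTS with some region of attraction containing `I`,
and the `d`-neighbourhood of its Success region within `X` is contained
in `I`. -/
def BT.Safeguarding {n : ℕ} (b : BT (EuclideanSpace ℝ (Fin n))) (Δt d : ℝ)
    (O I X : Set (EuclideanSpace ℝ (Fin n))) : Prop :=
  b.Safe O I ∧
  (∃ R' : Set (EuclideanSpace ℝ (Fin n)), ∃ τ : ℝ,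
      I ⊆ R' ∧ R' ⊆ b.R ∧ b.FTS Δt R' τ) ∧
  {x ∈ X | Metric.infDist x b.S ≤ d} ⊆ I

/-- Safety of Sequence Compositions. -/
theorem sequence_composition_safe
    (n : ℕ) (b₁ b₂ : BT (EuclideanSpace ℝ (Fin n)))
    (Δt d : ℝ) (hΔt : 0 < Δt) (hd : 0 < d)
    (O I X : Set (EuclideanSpace ℝ (Fin n)))
    (hIX : I ⊆ X)
    (hsg : b₁.Safeguarding Δt d O I X)
    (hSO : b₁.S ∩ O = ∅)
    (hb₂ : ∀ x, ‖x - b₂.f x‖ < d)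
    (hX₁ : Set.MapsTo b₁.f X X) (hX₂ : Set.MapsTo b₂.f X X) :
    (b₁.Sequence b₂).Safe O I := by
  obtain ⟨hsafe, _, hnbhd⟩ := hsg
  -- invariant
  set g := (b₁.Sequence b₂).f with hg
  have key : ∀ (x : EuclideanSpace ℝ (Fin n)),
      (x ∈ X ∧ ∃ y₀ ∈ I, ∃ k : ℕ, (∀ j < k, b₁.f^[j] y₀ ∉ b₁.S) ∧ b₁.f^[k] y₀ = x) →
      (x ∉ O ∧ (g x ∈ X ∧ ∃ y₀ ∈ I, ∃ k : ℕ,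
        (∀ j < k, b₁.f^[j] y₀ ∉ b₁.S) ∧ b₁.f^[k] y₀ = g x)) := by
    rintro x ⟨hxX, y₀, hy₀, k, hrun, hxk⟩
    by_cases hS : x ∈ b₁.S
    · have hr : b₁.r x = BTStatus.Success := hS
      have hgx : g x = b₂.f x := by simp [hg, BT.Sequence, hr]
      have hfX : b₂.f x ∈ X := hX₂ hxX
      have hinf : Metric.infDist (b₂.f x) b₁.S ≤ d := by
        calc Metric.infDist (b₂.f x) b₁.S ≤ dist (b₂.f x) x :=
              Metric.infDist_le_dist_of_mem hS
          _ = ‖x - b₂.f x‖ := by rw [dist_eq_norm, norm_sub_rev]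
          _ ≤ d := (hb₂ x).le
      have hI : b₂.f x ∈ I := hnbhd ⟨hfX, hinf⟩
      refine ⟨?_, ?_⟩
      · intro hO
        have : x ∈ b₁.S ∩ O := ⟨hS, hO⟩
        simp [hSO] at this
      · exact ⟨by rw [hgx]; exact hfX, b₂.f x, hI, 0, by simp, by simp [hgx]⟩
    · have hr : b₁.r x ≠ BTStatus.Success := hS
      have hgx : g x = b₁.f x := by simp [hg, BT.Sequence, hr]
      refine ⟨by rw [← hxk]; exact hsafe y₀ hy₀ k, ?_, y₀, hy₀, k + 1, ?_, ?_⟩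
      · rw [hgx]; exact hX₁ hxX
      · intro j hj
        rcases Nat.lt_succ_iff_lt_or_eq.mp hj with h | h
        · exact hrun j h
        · subst h; rw [hxk]; exact hS
      · rw [Function.iterate_succ_apply', hxk, hgx]
  intro x₀ hx₀ k
  have : ∀ k : ℕ, g^[k] x₀ ∈ X ∧ ∃ y₀ ∈ I, ∃ m : ℕ,
      (∀ j < m, b₁.f^[j] y₀ ∉ b₁.S) ∧ b₁.f^[m] y₀ = g^[k] x₀ := by
    intro k
    induction k with
    | zero => exact ⟨hIX hx₀, x₀, hx₀, 0, by simp, by simp⟩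
    | succ k ih =>
        have := (key _ ih).2
        rwa [Function.iterate_succ_apply']
  exact (key _ (this k)).1
end

section
/- Work in ℝ² with Δt = 1. Define BT₄ by f₄(x) = (x₁ − 0.1, x₂), S₄ = {x : x₁ ≤ 0}, R₄ = {x : x₁ > 0 and x₂ ≥ 0.48}, F₄ = {x : x₁ > 0 and x₂ < 0.48}; BT₅ by f₅(x) = (x₁, x₂ + 0.05), S₅ = {x : x₂ ≥ 0.48}, R₅ = {x : 0.3 ≤ x₂ < 0.48}, F₅ = {x : x₂ < 0.3}; and BT₆ by f₆(x) = (x₁, x₂ + 0.03), S₆ = {x : x₂ ≥ 0.3}, R₆ = {x : x₂ < 0.3}, F₆ = ∅. Then the combined BT₃ = Fallback(BT₄, BT₅, BT₆) is Finite Time Successful with Success region S₄ = {x : x₁ ≤ 0}, region of attraction R₃′ = {x ∈ ℝ² : 0 < x₁ ≤ 0.5, 0 ≤ x₂ ≤ 0.55}, and completion time bound τ₃ = 24: every trajectory x_{k+1} = f₃(x_k) starting in R₃′ remains in R₃′ until it first enters S₄, which happens within 24 time units. -/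
/-- `BT₄` (Walk Home): move left with speed `0.1`; Success once `x₁ ≤ 0`,
Running while standing (`x₂ ≥ 0.48`), Failure otherwise. -/
noncomputable def bt₄ : BT (ℝ × ℝ) where
  f x := (x.1 - 0.1, x.2)
  r x :=
    if x.1 ≤ 0 then BTStatus.Success
    else if 0.48 ≤ x.2 then BTStatus.Running
    else BTStatus.Failure

/-- `BT₅` (Sit to Stand): move the head up with speed `0.05`. -/
noncomputable def bt₅ : BT (ℝ × ℝ) where
  f x := (x.1, x.2 + 0.05)
  r x :=
    if 0.48 ≤ x.2 then BTStatus.Success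
    else if 0.3 ≤ x.2 then BTStatus.Running
    else BTStatus.Failure

/-- `BT₆` (Lie down to Sit Up): move the head up with speed `0.03`. -/
noncomputable def bt₆ : BT (ℝ × ℝ) where
  f x := (x.1, x.2 + 0.03)
  r x :=
    if 0.3 ≤ x.2 then BTStatus.Success
    else BTStatus.Running

namespace BTProof

noncomputable def bt₃ : BT (ℝ × ℝ) := (bt₄.Fallback bt₅).Fallback bt₆

lemma f3_walk (x : ℝ × ℝ) (h : (0.48:ℝ) ≤ x.2) : bt₃.f x = (x.1 - 0.1, x.2) := by
  simp only [bt₃, BT.Fallback, bt₄, bt₅, bt₆]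
  split_ifs <;> simp_all

lemma f3_stand (x : ℝ × ℝ) (h1 : (0:ℝ) < x.1) (h2 : (0.3:ℝ) ≤ x.2) (h3 : ¬ (0.48:ℝ) ≤ x.2) :
    bt₃.f x = (x.1, x.2 + 0.05) := by
  simp only [bt₃, BT.Fallback, bt₄, bt₅, bt₆]
  split_ifs <;> simp_all <;> linarith

lemma f3_lie (x : ℝ × ℝ) (h1 : (0:ℝ) < x.1) (h2 : ¬ (0.3:ℝ) ≤ x.2) :
    bt₃.f x = (x.1, x.2 + 0.03) := by
  have h3 : ¬ (0.48:ℝ) ≤ x.2 := by intro h; exact h2 (by linarith)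
  simp only [bt₃, BT.Fallback, bt₄, bt₅, bt₆]
  split_ifs <;> simp_all <;> linarith

lemma mem_S3 (x : ℝ × ℝ) : x ∈ bt₃.S ↔ x.1 ≤ 0 := by
  simp only [bt₃, BT.S, BT.Fallback, bt₄, bt₅, bt₆, Set.mem_setOf_eq]
  split_ifs <;> simp_all <;> linarith

def Rg : Set (ℝ × ℝ) := {x : ℝ × ℝ | 0 < x.1 ∧ x.1 ≤ 0.5 ∧ 0 ≤ x.2 ∧ x.2 ≤ 0.55}

lemma stageA : ∀ n : ℕ, ∀ x : ℝ × ℝ, x.1 ≤ 0.1 * n → x.1 ≤ 0.5 → (0.48:ℝ) ≤ x.2 → x.2 ≤ 0.55 →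
    ∃ N : ℕ, N ≤ n ∧ (∀ k < N, bt₃.f^[k] x ∈ Rg) ∧ bt₃.f^[N] x ∈ bt₃.S := by
  intro n
  induction n with
  | zero =>
    intro x h1 _ _ _
    refine ⟨0, le_refl _, fun k hk => absurd hk (Nat.not_lt_zero k), ?_⟩
    rw [Function.iterate_zero_apply]
    exact (mem_S3 x).mpr (by push_cast at h1; linarith)
  | succ m ih =>
    intro x h1 h2 h3 h4
    by_cases hx : x.1 ≤ 0
    · exact ⟨0, Nat.zero_le _, fun k hk => absurd hk (Nat.not_lt_zero k),
          by rw [Function.iterate_zero_apply]; exact (mem_S3 x).mpr hx⟩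
    · push_neg at hx
      have hf : bt₃.f x = (x.1 - 0.1, x.2) := f3_walk x h3
      have hstep : (bt₃.f x).1 ≤ 0.1 * m := by
        rw [hf]; push_cast at h1 ⊢; linarith
      obtain ⟨N, hN, hstay, hS⟩ := ih (bt₃.f x) hstep (by rw [hf]; dsimp; linarith)
        (by rw [hf]; exact h3) (by rw [hf]; exact h4)
      refine ⟨N + 1, by omega, ?_, ?_⟩
      · intro k hk
        cases k with
        | zero => rw [Function.iterate_zero_apply]; exact ⟨hx, h2, by linarith, h4⟩
        | succ j =>
          rw [Function.iterate_succ_apply]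
          exact hstay j (by omega)
      · rw [Function.iterate_succ_apply]; exact hS

lemma stageB : ∀ n : ℕ, ∀ x : ℝ × ℝ, 0 < x.1 → x.1 ≤ 0.5 → (0.3:ℝ) ≤ x.2 → x.2 ≤ 0.55 →
    (0.48:ℝ) ≤ x.2 + 0.05 * n →
    ∃ N : ℕ, N ≤ n + 5 ∧ (∀ k < N, bt₃.f^[k] x ∈ Rg) ∧ bt₃.f^[N] x ∈ bt₃.S := by
  intro n
  induction n with
  | zero =>
    intro x h1 h2 h3 h4 h5
    push_cast at h5
    obtain ⟨N, hN, hs⟩ := stageA 5 x (by push_cast; linarith) h2 (by linarith) h4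
    exact ⟨N, by omega, hs⟩
  | succ m ih =>
    intro x h1 h2 h3 h4 h5
    by_cases hx : (0.48:ℝ) ≤ x.2
    · obtain ⟨N, hN, hs⟩ := stageA 5 x (by push_cast; linarith) h2 hx h4
      exact ⟨N, by omega, hs⟩
    · have hf : bt₃.f x = (x.1, x.2 + 0.05) := f3_stand x h1 h3 hx
      push_neg at hx
      obtain ⟨N, hN, hstay, hS⟩ := ih (bt₃.f x) (by rw [hf]; exact h1) (by rw [hf]; exact h2)
        (by rw [hf]; dsimp; linarith) (by rw [hf]; dsimp; linarith)
        (by rw [hf]; dsimp; push_cast at h5 ⊢; linarith)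
      refine ⟨N + 1, by omega, ?_, ?_⟩
      · intro k hk
        cases k with
        | zero => rw [Function.iterate_zero_apply]; exact ⟨h1, h2, by linarith, h4⟩
        | succ j =>
          rw [Function.iterate_succ_apply]
          exact hstay j (by omega)
      · rw [Function.iterate_succ_apply]; exact hS

lemma stageC : ∀ n : ℕ, ∀ x : ℝ × ℝ, 0 < x.1 → x.1 ≤ 0.5 → (0:ℝ) ≤ x.2 → x.2 ≤ 0.55 →
    (0.3:ℝ) ≤ x.2 + 0.03 * n →
    ∃ N : ℕ, N ≤ n + 9 ∧ (∀ k < N, bt₃.f^[k] x ∈ Rg) ∧ bt₃.f^[N] x ∈ bt₃.S := by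
  intro n
  induction n with
  | zero =>
    intro x h1 h2 h3 h4 h5
    push_cast at h5
    obtain ⟨N, hN, hs⟩ := stageB 4 x h1 h2 (by linarith) h4 (by push_cast; linarith)
    exact ⟨N, by omega, hs⟩
  | succ m ih =>
    intro x h1 h2 h3 h4 h5
    by_cases hx : (0.3:ℝ) ≤ x.2
    · obtain ⟨N, hN, hs⟩ := stageB 4 x h1 h2 hx h4 (by push_cast; linarith)
      exact ⟨N, by omega, hs⟩
    · have hf : bt₃.f x = (x.1, x.2 + 0.03) := f3_lie x h1 hx
      push_neg at hx
      obtain ⟨N, hN, hstay, hS⟩ := ih (bt₃.f x) (by rw [hf]; exact h1) (by rw [hf]; exact h2)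
        (by rw [hf]; dsimp; linarith) (by rw [hf]; dsimp; linarith)
        (by rw [hf]; dsimp; push_cast at h5 ⊢; linarith)
      refine ⟨N + 1, by omega, ?_, ?_⟩
      · intro k hk
        cases k with
        | zero => rw [Function.iterate_zero_apply]; exact ⟨h1, h2, h3, h4⟩
        | succ j =>
          rw [Function.iterate_succ_apply]
          exact hstay j (by omega)
      · rw [Function.iterate_succ_apply]; exact hS

end BTProof


/-- The combination `BT₃ = Fallback(BT₄, BT₅, BT₆)` is FTS with Success region
`{x | x₁ ≤ 0}`, region of attraction `{x | 0 < x₁ ≤ 0.5, 0 ≤ x₂ ≤ 0.55}` and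
completion time bound `24` (with `Δt = 1`). -/
theorem humanoid_fallback_FTS :
    ((bt₄.Fallback bt₅).Fallback bt₆).S = {x : ℝ × ℝ | x.1 ≤ 0} ∧
    ((bt₄.Fallback bt₅).Fallback bt₆).FTS 1
      {x : ℝ × ℝ | 0 < x.1 ∧ x.1 ≤ 0.5 ∧ 0 ≤ x.2 ∧ x.2 ≤ 0.55} 24 := by
  constructor
  · ext x
    exact BTProof.mem_S3 x
  · intro x hx
    obtain ⟨h1, h2, h3, h4⟩ := hx
    obtain ⟨N, hN, hstay, hS⟩ := BTProof.stageC 10 x h1 h2 h3 h4 (by push_cast; linarith)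
    refine ⟨N, ?_, hstay, hS⟩
    have hN' : (N:ℝ) ≤ 19 := by exact_mod_cast hN
    linarith
end

section
/- (BTs generalize Decision Trees.) Let P ⊆ ℝⁿ be a predicate and let BT_P be the condition BT with arbitrary f_P : ℝⁿ → ℝⁿ and r_P(x) = Success if x ∈ P and r_P(x) = Failure if x ∉ P. Let BT₁ = (f₁, r₁) and BT₂ = (f₂, r₂) be BTs whose return status is identically Running (r₁ ≡ Running and r₂ ≡ Running). Then BT₀ = Fallback(Sequence(BT_P, BT₁), BT₂) satisfies, for every x ∈ ℝⁿ: f₀(x) = f₁(x) if x ∈ P and f₀(x) = f₂(x) if x ∉ P, and r₀(x) = Running. Hence BT₀ realizes exactly the 'if P then BT₁ else BT₂' dynamics of the corresponding Decision Tree node, independently of f_P. -/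
/-- BTs generalize Decision Trees: `Fallback(Sequence(BT_P, BT₁), BT₂)`
realizes exactly the `if P then BT₁ else BT₂` dynamics, always returning
Running, independently of the dynamics of the condition node `BT_P`. -/
theorem BT_generalizes_decision_tree
    (n : ℕ) (P : Set (EuclideanSpace ℝ (Fin n)))
    (btP b₁ b₂ : BT (EuclideanSpace ℝ (Fin n)))
    (hrP : ∀ x, (x ∈ P → btP.r x = BTStatus.Success) ∧
               (x ∉ P → btP.r x = BTStatus.Failure))
    (hr₁ : ∀ x, b₁.r x = BTStatus.Running)
    (hr₂ : ∀ x, b₂.r x = BTStatus.Running) :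
    ∀ x,
      (x ∈ P → ((btP.Sequence b₁).Fallback b₂).f x = b₁.f x) ∧
      (x ∉ P → ((btP.Sequence b₁).Fallback b₂).f x = b₂.f x) ∧
      ((btP.Sequence b₁).Fallback b₂).r x = BTStatus.Running := by
  intro x
  by_cases hx : x ∈ P <;>
    simp [BT.Fallback, BT.Sequence, (hrP x).1, (hrP x).2, hx, hr₁, hr₂]
end

section
/- (BTs generalize the Subsumption Architecture.) Let S₁, S₂ : ℝⁿ → ℝⁿ be two controllers and N₁, N₂ ⊆ ℝⁿ the sets where each controller signals that it needs to execute, and let the subsumption composition be Sub(S₁, S₂)(x) = S₁(x) if x ∈ N₁ and Sub(S₁, S₂)(x) = S₂(x) otherwise. Define BTᵢ (i = 1, 2) by fᵢ = Sᵢ and rᵢ(x) = Running if x ∈ Nᵢ and rᵢ(x) = Failure otherwise (never Success). Then BT₀ = Fallback(BT₁, BT₂) satisfies f₀(x) = Sub(S₁, S₂)(x) for every x ∈ ℝⁿ; moreover r₀(x) = Running if x ∈ N₁ ∪ N₂ and r₀(x) = Failure otherwise. -/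
/-- BTs generalize the Subsumption Architecture: the Fallback of the two
controllers (returning Running when they need to execute and Failure
otherwise) has exactly the dynamics of the subsumption composition
`Sub(S₁, S₂)`. -/
theorem BT_generalizes_subsumption
    (n : ℕ)
    (S₁ S₂ : EuclideanSpace ℝ (Fin n) → EuclideanSpace ℝ (Fin n))
    (N₁ N₂ : Set (EuclideanSpace ℝ (Fin n)))
    (b₁ b₂ : BT (EuclideanSpace ℝ (Fin n)))
    (hf₁ : b₁.f = S₁) (hf₂ : b₂.f = S₂)
    (hr₁ : ∀ x, (x ∈ N₁ → b₁.r x = BTStatus.Running) ∧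
               (x ∉ N₁ → b₁.r x = BTStatus.Failure))
    (hr₂ : ∀ x, (x ∈ N₂ → b₂.r x = BTStatus.Running) ∧
               (x ∉ N₂ → b₂.r x = BTStatus.Failure)) :
    ∀ x,
      (x ∈ N₁ → (b₁.Fallback b₂).f x = S₁ x) ∧
      (x ∉ N₁ → (b₁.Fallback b₂).f x = S₂ x) ∧
      (x ∈ N₁ ∪ N₂ → (b₁.Fallback b₂).r x = BTStatus.Running) ∧
      (x ∉ N₁ ∪ N₂ → (b₁.Fallback b₂).r x = BTStatus.Failure) := by
  intro x
  obtain ⟨h1r, h1f⟩ := hr₁ x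
  obtain ⟨h2r, h2f⟩ := hr₂ x
  by_cases h1 : x ∈ N₁ <;> by_cases h2 : x ∈ N₂ <;>
    simp [BT.Fallback, h1r, h1f, h2r, h2f, h1, h2, hf₁, hf₂]
end

section
/- (Teleo-Reactive/BT analogy.) Let c₁, …, c_m ⊆ ℝⁿ be conditions and a₁, …, a_m : ℝⁿ → ℝⁿ be actions. For each i, let C_i be the condition BT with arbitrary f and with r(x) = Success if x ∈ c_i and Failure otherwise, and let A_i be the action BT with f = a_i and r ≡ Running. Set BT_TR = Fallback(Sequence(C₁, A₁), Sequence(C₂, A₂), …, Sequence(C_m, A_m)) (Fallbacks nested to the left). Then for every x ∈ ℝⁿ: if x ∈ c_j for some j, and i is the least index with x ∈ c_i, then f_TR(x) = a_i(x) and r_TR(x) = Running — that is, the BT executes exactly the action that the Teleo-Reactive program with prioritized rule list c₁ → a₁, …, c_m → a_m would execute; and if x ∉ c_j for all j, then r_TR(x) = Failure. -/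
open scoped Classical in
/-- The condition BT associated to a condition `c` (with arbitrary
dynamics `g`): Success on `c`, Failure elsewhere. -/
noncomputable def condBT {X : Type*} (c : Set X) (g : X → X) : BT X where
  f := g
  r x := if x ∈ c then BTStatus.Success else BTStatus.Failure

/-- The action BT associated to an action `a`: it always returns Running. -/
def actBT {X : Type*} (a : X → X) : BT X where
  f := a
  r _ := BTStatus.Running

/-- Iterated (left-nested) Fallback composition. -/
def foldFallback {X : Type*} (b : ℕ → BT X) : ℕ → BT X
  | 0 => b 0
  | k + 1 => (foldFallback b k).Fallback (b (k + 1))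


section Aux
variable {X : Type*}

lemma foldFallback_spec (c : ℕ → Set X) (a g : ℕ → X → X) (k : ℕ) (x : X) :
    (∀ i ≤ k, x ∈ c i → (∀ j < i, x ∉ c j) →
      (foldFallback (fun i => (condBT (c i) (g i)).Sequence (actBT (a i))) k).f x = a i x ∧
      (foldFallback (fun i => (condBT (c i) (g i)).Sequence (actBT (a i))) k).r x = BTStatus.Running) ∧
    ((∀ j ≤ k, x ∉ c j) →
      (foldFallback (fun i => (condBT (c i) (g i)).Sequence (actBT (a i))) k).r x = BTStatus.Failure) := by
  classical
  induction k with
  | zero =>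
    constructor
    · intro i hi hx _
      interval_cases i
      simp [foldFallback, BT.Sequence, condBT, actBT, hx]
    · intro h
      simp [foldFallback, BT.Sequence, condBT, actBT, h 0 le_rfl]
  | succ k ih =>
    constructor
    · intro i hi hx hleast
      by_cases hall : ∀ j ≤ k, x ∉ c j
      · have hi' : i = k + 1 := by
          rcases Nat.lt_or_ge i (k+1) with h | h
          · exact absurd hx (hall i (Nat.lt_succ_iff.mp h))
          · omega
        subst hi'
        have hF := ih.2 hall
        simp only [foldFallback, BT.Fallback, hF]
        simp [BT.Sequence, condBT, actBT, hx]
      · push_neg at hall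
        obtain ⟨j, hj, hxj⟩ := hall
        -- find least such j
        have : ∃ j, x ∈ c j := ⟨j, hxj⟩
        set j0 := Nat.find this with hj0
        have hxj0 : x ∈ c j0 := Nat.find_spec this
        have hleast0 : ∀ l < j0, x ∉ c l := fun l hl => Nat.find_min this hl
        have hj0le : j0 ≤ k := le_trans (Nat.find_min' this hxj) hj
        have := ih.1 j0 hj0le hxj0 hleast0
        have hij : i = j0 := by
          have h1 : ¬ i < j0 := fun h => hleast0 i h hx
          have h2 : ¬ j0 < i := fun h => hleast j0 h hxj0
          omega
        subst hij
        simp only [foldFallback, BT.Fallback, this.2]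
        simp [this.1, this.2]
    · intro h
      have hF := ih.2 (fun j hj => h j (le_trans hj (Nat.le_succ k)))
      simp only [foldFallback, BT.Fallback, hF]
      simp [BT.Sequence, condBT, actBT, h (k+1) le_rfl]

end Aux

/-- Teleo-Reactive/BT analogy: the BT
`Fallback(Sequence(C₁,A₁), …, Sequence(C_m,A_m))` executes exactly the action
of the first condition of the prioritized rule list `c₁ → a₁, …, c_m → a_m`
that holds (returning Running), and returns Failure if no condition holds. -/
theorem BT_generalizes_teleo_reactive
    (n m : ℕ) (hm : 0 < m)
    (c : ℕ → Set (EuclideanSpace ℝ (Fin n)))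
    (a g : ℕ → EuclideanSpace ℝ (Fin n) → EuclideanSpace ℝ (Fin n)) :
    let btTR := foldFallback
      (fun i => (condBT (c i) (g i)).Sequence (actBT (a i))) (m - 1)
    ∀ x : EuclideanSpace ℝ (Fin n),
      (∀ i < m, x ∈ c i → (∀ j < i, x ∉ c j) →
        btTR.f x = a i x ∧ btTR.r x = BTStatus.Running) ∧
      ((∀ j < m, x ∉ c j) → btTR.r x = BTStatus.Failure) := by
  intro btTR x
  have H := foldFallback_spec c a g (m - 1) x
  constructor
  · intro i hi hx hleast
    exact H.1 i (by omega) hx hleast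
  · intro h
    exact H.2 (fun j hj => h j (by omega))
end
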